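/- Let G be a group with lower central series γ_0(G) = G, γ_{k+1}(G) = ⁅G, γ_k(G)⁆. For all natural numbers a, b, c and all x ∈ γ_a(G), y ∈ γ_b(G), z ∈ γ_c(G), the product ⁅⁅x, y⁆, z⁆ * ⁅⁅y, z⁆, x⁆ * ⁅⁅z, x⁆, y⁆ lies in γ_{a+b+c+3}(G). In other words, the bracket induced by the group commutator on the graded abelian group ⊕_n γ_n(G)/γ_{n+1}(G) satisfies the Jacobi identity, making it a Lie ring. -/

import Mathlib

/-- The commutator `⁅x, y⁆ = x⁻¹y⁻¹xy`. -/
def commE {G : Type*} [Group G] (x y : G) : G := x⁻¹ * y⁻¹ * x * y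

/-!
By the three subgroups lemma, `⁅γ_i, γ_j⁆ ≤ γ_{i+j+1}`. Work in `G ⧸ γ_{a+b+c+3}`, where every
element of depth `a+b+c+2` is central. There `⁅v, z⁆` is multiplicative and conjugation invariant
in `v` of depth `s` when `z` has depth `k` and `s + k = a+b+c+1`, so
`⁅⁅x, y⁻¹⁆, z⁆ = ⁅⁅x, y⁆, z⁆⁻¹`. The three factors of the Hall–Witt identity are central
conjugates of such commutators, so it says that the product of the inverses of the three Jacobi
terms is trivial.
-/

open QuotientGroup
open scoped commutatorElement

namespace Subgroup

variable {G : Type*} [Group G]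

theorem commutator_commutator_le_of_rotate {A B C N : Subgroup G} [N.Normal]
    (h₁ : ⁅⁅B, C⁆, A⁆ ≤ N) (h₂ : ⁅⁅C, A⁆, B⁆ ≤ N) : ⁅⁅A, B⁆, C⁆ ≤ N := by
  have iff_map : ∀ X Y Z : Subgroup G,
      ⁅⁅X, Y⁆, Z⁆ ≤ N ↔ ⁅⁅X.map (mk' N), Y.map (mk' N)⁆, Z.map (mk' N)⁆ = ⊥ := by
    intro X Y Z
    rw [← map_commutator, ← map_commutator, map_eq_bot_iff, ker_mk']
  rw [iff_map] at h₁ h₂ ⊢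
  exact commutator_commutator_eq_bot_of_rotate h₁ h₂

local notation "γ" => lowerCentralSeries (⊤ : Subgroup G)

theorem commutator_lowerCentralSeries_le (i j : ℕ) : ⁅γ i, γ j⁆ ≤ γ (i + j + 1) := by
  induction i generalizing j with
  | zero => rw [lowerCentralSeries_zero, commutator_comm, zero_add, lowerCentralSeries_succ]
  | succ i ih =>
    rw [lowerCentralSeries_succ]
    apply commutator_commutator_le_of_rotate
    · rw [commutator_comm ⊤, ← lowerCentralSeries_succ, commutator_comm]
      exact (ih (j + 1)).trans (lowerCentralSeries_antitone _ (by omega))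
    · calc ⁅⁅γ j, γ i⁆, ⊤⁆ ≤ ⁅γ (i + j + 1), ⊤⁆ :=
            commutator_mono (commutator_comm (γ j) (γ i) ▸ ih j) le_rfl
        _ ≤ γ (i + 1 + j + 1) :=
          lowerCentralSeries_antitone _ (by omega : i + 1 + j + 1 ≤ i + j + 1 + 1)

end Subgroup

section LowerCentralSeries

variable {G : Type*} [Group G]

local notation "γ" => Subgroup.lowerCentralSeries (⊤ : Subgroup G)

theorem commE_mem_lowerCentralSeries {i j : ℕ} {x y : G} (hx : x ∈ γ i) (hy : y ∈ γ j) :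
    commE x y ∈ γ (i + j + 1) := by
  have : commE x y = ⁅x⁻¹, y⁻¹⁆ := by simp [commE, commutatorElement_def, mul_assoc]
  rw [this]
  exact Subgroup.commutator_lowerCentralSeries_le i j
    (Subgroup.commutator_mem_commutator (inv_mem hx) (inv_mem hy))

theorem mk_eq_one_of_mem_lowerCentralSeries {s m : ℕ} {g : G} (hg : g ∈ γ s) (hm : m ≤ s) :
    (g : G ⧸ γ m) = 1 :=
  (eq_one_iff g).mpr (Subgroup.lowerCentralSeries_antitone _ hm hg)

theorem commute_mk_of_mem_lowerCentralSeries {s m : ℕ} {g : G} (hg : g ∈ γ s) (hm : m ≤ s + 1)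
    (h : G ⧸ γ m) : Commute (g : G ⧸ γ m) h := by
  induction h using QuotientGroup.induction_on with
  | H h =>
    rw [← commutatorElement_eq_one_iff_commute]
    exact (map_commutatorElement (mk' (γ m)) g h).symm.trans
      (mk_eq_one_of_mem_lowerCentralSeries (s := s + 1)
        (Subgroup.commutator_mem_commutator hg (Subgroup.mem_top h)) hm)

theorem mk_conj_eq_of_mem_lowerCentralSeries {s m : ℕ} {g : G} (hg : g ∈ γ s) (hm : m ≤ s + 1)
    (h : G) : ((h⁻¹ * g * h : G) : G ⧸ γ m) = g := by
  rw [mk_mul, mk_mul, mul_assoc, (commute_mk_of_mem_lowerCentralSeries hg hm _).eq, mk_inv,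
    inv_mul_cancel_left]

theorem mk_commE_mul_left {s k m : ℕ} {v z : G} (hv : v ∈ γ s) (hz : z ∈ γ k)
    (hm : m ≤ s + k + 2) (w : G) :
    ((commE (v * w) z : G) : G ⧸ γ m) = (commE v z : G) * (commE w z : G) := by
  have expand : commE (v * w) z = w⁻¹ * commE v z * w * commE w z := by
    unfold commE; group
  rw [expand, mk_mul, mk_conj_eq_of_mem_lowerCentralSeries (commE_mem_lowerCentralSeries hv hz)
    (by omega)]

theorem mk_commE_inv_left {s k m : ℕ} {v z : G} (hv : v ∈ γ s) (hz : z ∈ γ k)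
    (hm : m ≤ s + k + 2) : ((commE v⁻¹ z : G) : G ⧸ γ m) = ((commE v z : G) : G ⧸ γ m)⁻¹ := by
  refine eq_inv_of_mul_eq_one_right ?_
  rw [← mk_commE_mul_left hv hz hm, mul_inv_cancel]
  simp [commE]

theorem mk_commE_conj_left {s k m : ℕ} {v z : G} (hv : v ∈ γ s) (hz : z ∈ γ k)
    (hm : m ≤ s + k + 2) (g : G) :
    ((commE (g * v * g⁻¹) z : G) : G ⧸ γ m) = (commE v z : G) := by
  have conj : g * v * g⁻¹ = v * commE v g⁻¹ := by unfold commE; group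
  have deeper : commE (commE v g⁻¹) z ∈ γ (s + 0 + 1 + k + 1) :=
    commE_mem_lowerCentralSeries (commE_mem_lowerCentralSeries (j := 0) hv (Subgroup.mem_top _)) hz
  rw [conj, mk_commE_mul_left hv hz hm, mk_eq_one_of_mem_lowerCentralSeries deeper (by omega),
    mul_one]

theorem commute_mk_commE_commE {a b c m : ℕ} {x y z : G} (hx : x ∈ γ a) (hy : y ∈ γ b)
    (hz : z ∈ γ c) (hm : m ≤ a + b + c + 3) (h : G ⧸ γ m) :
    Commute ((commE (commE x y) z : G) : G ⧸ γ m) h :=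
  commute_mk_of_mem_lowerCentralSeries
    (commE_mem_lowerCentralSeries (commE_mem_lowerCentralSeries hx hy) hz) (by omega) h

theorem mk_conj_commE_commE_inv_right {a b c m : ℕ} {x y z : G} (hx : x ∈ γ a) (hy : y ∈ γ b)
    (hz : z ∈ γ c) (hm : m ≤ a + b + c + 3) (g : G) :
    ((g⁻¹ * commE (commE x y⁻¹) z * g : G) : G ⧸ γ m) =
      ((commE (commE x y) z : G) : G ⧸ γ m)⁻¹ := by
  have hxy := commE_mem_lowerCentralSeries hx hy
  have conj : commE x y⁻¹ = y * (commE x y)⁻¹ * y⁻¹ := by unfold commE; group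
  rw [mk_conj_eq_of_mem_lowerCentralSeries
      (commE_mem_lowerCentralSeries (commE_mem_lowerCentralSeries hx (inv_mem hy)) hz) (by omega),
    conj, mk_commE_conj_left (inv_mem hxy) hz (by omega), mk_commE_inv_left hxy hz (by omega)]

end LowerCentralSeries

theorem commE_hall_witt {G : Type*} [Group G] (x y z : G) :
    y⁻¹ * commE (commE x y⁻¹) z * y * (z⁻¹ * commE (commE y z⁻¹) x * z) *
      (x⁻¹ * commE (commE z x⁻¹) y * x) = 1 := by
  unfold commE; group

/-- Jacobi identity for the graded Lie ring of the lower central series: if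
`x ∈ γ_a(G)`, `y ∈ γ_b(G)`, `z ∈ γ_c(G)`, then
`⁅⁅x,y⁆,z⁆ * ⁅⁅y,z⁆,x⁆ * ⁅⁅z,x⁆,y⁆ ∈ γ_{a+b+c+3}(G)`. -/
theorem graded_jacobi_identity {G : Type*} [Group G] (a b c : ℕ) (x y z : G)
    (hx : x ∈ Subgroup.lowerCentralSeries (⊤ : Subgroup G) a) (hy : y ∈ Subgroup.lowerCentralSeries (⊤ : Subgroup G) b)
    (hz : z ∈ Subgroup.lowerCentralSeries (⊤ : Subgroup G) c) :
    commE (commE x y) z * commE (commE y z) x * commE (commE z x) y ∈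
      Subgroup.lowerCentralSeries (⊤ : Subgroup G) (a + b + c + 3) := by
  have hall_witt := congrArg ((↑) : G → G ⧸ Subgroup.lowerCentralSeries ⊤ (a + b + c + 3))
    (commE_hall_witt x y z)
  rw [mk_mul, mk_mul, mk_conj_commE_commE_inv_right hx hy hz le_rfl,
    mk_conj_commE_commE_inv_right hy hz hx (by omega),
    mk_conj_commE_commE_inv_right hz hx hy (by omega), mk_one] at hall_witt
  rw [← eq_one_iff, mk_mul, mk_mul, ← inv_eq_one,
    (commute_mk_commE_commE hz hx hy (by omega) _).symm.mul_inv,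
    (commute_mk_commE_commE hx hy hz le_rfl _).mul_inv]
  exact hall_witt
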